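/- For a strong symmetric digraph D of order n and any integer k with 2 ≤ k ≤ n, λ_k(D) ≥ 2 if and only if D has no bridge. -/

import Mathlib

open Relation Set

variable {V : Type*}

/-- Reachability in a digraph using only arcs from the arc set `B`. -/
def ArcReach (B : Set (V × V)) : V → V → Prop :=
  Relation.ReflTransGen (fun x y => (x, y) ∈ B)

/-- A digraph, given by its arc set on vertex type `V`, is strongly connected. -/
def IsStrong (A : Set (V × V)) : Prop :=
  ∀ u v : V, ArcReach A u v

/-- `(W, B)` is an `S`-strong subgraph of the digraph with arc set `A`:
a strongly connected subdigraph whose vertex set contains `S`. -/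
def SStrongSub (A : Set (V × V)) (S W : Set V) (B : Set (V × V)) : Prop :=
  B ⊆ A ∧ S ⊆ W ∧ (∀ e ∈ B, e.1 ∈ W ∧ e.2 ∈ W) ∧
    ∀ u ∈ W, ∀ v ∈ W, ArcReach B u v

/-- `λ_S(D)`: the maximum number of pairwise arc-disjoint `S`-strong subgraphs. -/
noncomputable def lamS (A : Set (V × V)) (S : Set V) : ℕ :=
  sSup {t | ∃ (W : Fin t → Set V) (B : Fin t → Set (V × V)),
    (∀ i, SStrongSub A S (W i) (B i)) ∧
    ∀ i j, i ≠ j → Disjoint (B i) (B j)}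

/-- `κ_S(D)`: the maximum number of pairwise internally disjoint
(arc-disjoint, vertex sets meeting exactly in `S`) `S`-strong subgraphs. -/
noncomputable def kapS (A : Set (V × V)) (S : Set V) : ℕ :=
  sSup {t | ∃ (W : Fin t → Set V) (B : Fin t → Set (V × V)),
    (∀ i, SStrongSub A S (W i) (B i)) ∧
    (∀ i j, i ≠ j → Disjoint (B i) (B j)) ∧
    ∀ i j, i ≠ j → W i ∩ W j = S}

/-- Strong subgraph `k`-arc-connectivity `λ_k(D)`. -/
noncomputable def lamK [Fintype V] (A : Set (V × V)) (k : ℕ) : ℕ :=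
  sInf {m | ∃ S : Finset V, S.card = k ∧ m = lamS A ↑S}

/-- Strong subgraph `k`-connectivity `κ_k(D)`. -/
noncomputable def kapK [Fintype V] (A : Set (V × V)) (k : ℕ) : ℕ :=
  sInf {m | ∃ S : Finset V, S.card = k ∧ m = kapS A ↑S}

/-- An arc set is (the arc set of) a digraph: no loops. -/
def IsDigraph {V : Type*} (A : Set (V × V)) : Prop := ∀ e ∈ A, e.1 ≠ e.2

/-- A digraph is symmetric if each arc is accompanied by its reverse. -/
def SymmetricArcs {V : Type*} (A : Set (V × V)) : Prop :=
  ∀ x y : V, (x, y) ∈ A → (y, x) ∈ A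

/-- Weak connectivity: the underlying undirected graph is connected. -/
def WeaklyConnected {V : Type*} (A : Set (V × V)) : Prop :=
  ∀ u v : V, Relation.ReflTransGen (fun x y => (x, y) ∈ A ∨ (y, x) ∈ A) u v

/-- The digraph has a bridge: a 2-cycle `xyx` whose removal disconnects the
underlying undirected graph. -/
def HasBridge {V : Type*} (A : Set (V × V)) : Prop :=
  ∃ x y : V, x ≠ y ∧ (x, y) ∈ A ∧ (y, x) ∈ A ∧
    ¬ WeaklyConnected (A \ {(x, y), (y, x)})

/-!
If `xyx` is a bridge, take `S ⊇ {x, y}`. On its way from `x` to `y`, every `S`-strong subgraph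
has to leave the weak component of `x` in `D - xyx`, and `xy` is the only arc that does; so no two
of them are arc-disjoint and `λ_S(D) ≤ 1`.

Without a bridge, Robbins' theorem gives a strong orientation `O` of `D`, and `O` together with its
reverse are two arc-disjoint spanning strong subgraphs. Robbins' theorem is proved by ears: a
strongly oriented vertex set `W ≠ V` grows by an arc `uv` leaving `W` followed by a path from `v`
back to `W` avoiding `uv`, which exists because `uv` is not a bridge. The path is oriented one arc
at a time, keeping an escape path from its tip back to `W`.
-/

namespace Relation

variable {α : Type*} {r : α → α → Prop} {a b : α} {s : Set α}

theorem ReflTransGen.avoid_start (h : ReflTransGen r a b) :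
    ReflTransGen (fun x y => r x y ∧ y ≠ a) a b := by
  induction h with
  | refl => exact .refl
  | @tail c d _ hcd ih =>
    by_cases hd : d = a
    · exact hd ▸ .refl
    · exact ih.tail ⟨hcd, hd⟩

theorem ReflTransGen.exists_first_mem (h : ReflTransGen r a b) (hb : b ∈ s) :
    ∃ z ∈ s, ReflTransGen (fun x y => r x y ∧ x ∉ s) a z := by
  induction h using ReflTransGen.head_induction_on with
  | refl => exact ⟨b, hb, .refl⟩
  | @head p q hpq _ ih =>
    by_cases hp : p ∈ s
    · exact ⟨p, hp, .refl⟩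
    · obtain ⟨z, hz, hqz⟩ := ih
      exact ⟨z, hz, hqz.head ⟨hpq, hp⟩⟩

theorem ReflTransGen.exists_crossing (h : ReflTransGen r a b) (ha : a ∈ s) (hb : b ∉ s) :
    ∃ p q, r p q ∧ p ∈ s ∧ q ∉ s := by
  induction h with
  | refl => exact absurd ha hb
  | @tail c d _ hcd ih =>
    by_cases hc : c ∈ s
    · exact ⟨c, d, hcd, hc, hb⟩
    · exact ih hc

end Relation

open Relation

section Orientation

variable {A B O : Set (V × V)} {W W₀ : Set V} {t w x y : V}

theorem ArcReach.mono (hBO : B ⊆ O) (h : ArcReach B x y) : ArcReach O x y :=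
  ReflTransGen.mono (fun _ _ hxy => hBO hxy) _ _ h

theorem ArcReach.insert_tail (h : ArcReach O x t) : ArcReach (insert (t, w) O) x w :=
  (h.mono (subset_insert _ _)).tail (mem_insert _ _)

theorem IsStrong.of_weaklyConnected (hsym : SymmetricArcs A) (h : WeaklyConnected A) :
    IsStrong A := fun u v =>
  ReflTransGen.mono (fun x y hxy => hxy.elim id (hsym y x)) _ _ (h u v)

theorem SymmetricArcs.diff_pair (hsym : SymmetricArcs A) :
    SymmetricArcs (A \ {(x, y), (y, x)}) := by
  rintro a b ⟨hab, hne⟩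
  refine ⟨hsym a b hab, fun h => hne ?_⟩
  simp only [mem_insert_iff, mem_singleton_iff, Prod.mk.injEq] at h ⊢
  tauto

theorem isStrong_diff_pair_of_not_hasBridge (hsym : SymmetricArcs A) (hnb : ¬HasBridge A)
    (hxy : (x, y) ∈ A) (hne : x ≠ y) : IsStrong (A \ {(x, y), (y, x)}) :=
  .of_weaklyConnected hsym.diff_pair fun u v => by
    by_contra h
    exact hnb ⟨x, y, hne, hxy, hsym x y hxy, fun hw => h (hw u v)⟩

structure IsOrientationOn (A O : Set (V × V)) (W : Set V) : Prop where
  subset : O ⊆ A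
  antisymm : ∀ x y, (x, y) ∈ O → (y, x) ∉ O
  mem : ∀ e ∈ O, e.1 ∈ W ∧ e.2 ∈ W

structure IsStrongOrientationOn (A O : Set (V × V)) (W : Set V) : Prop
    extends IsOrientationOn A O W where
  reach : ∀ a ∈ W, ∀ b ∈ W, ArcReach O a b

structure IsEarOn (A O : Set (V × V)) (W₀ W : Set V) (t : V) : Prop
    extends IsOrientationOn A O W where
  base_subset : W₀ ⊆ W
  tip_mem : t ∈ W
  reach_of_base : ∀ a ∈ W₀, ∀ b ∈ W, ArcReach O a b
  reach_tip : ∀ a ∈ W, ArcReach O a t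

theorem IsOrientationOn.insert (h : IsOrientationOn A O W) (htw : (t, w) ∈ A) (ht : t ∈ W)
    (hwt : (w, t) ∉ O) (hne : t ≠ w) : IsOrientationOn A (insert (t, w) O) (insert w W) where
  subset := insert_subset htw h.subset
  antisymm := by
    rintro a b (hab | hab) (hba | hba)
    · simp_all
    · simp_all
    · simp_all
    · exact h.antisymm a b hab hba
  mem := by
    rintro e (rfl | he)
    · exact ⟨mem_insert_of_mem _ ht, mem_insert _ _⟩
    · exact ⟨mem_insert_of_mem _ (h.mem e he).1, mem_insert_of_mem _ (h.mem e he).2⟩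

theorem IsStrongOrientationOn.isEarOn_self (h : IsStrongOrientationOn A O W) (ht : t ∈ W) :
    IsEarOn A O W W t :=
  { h.toIsOrientationOn with
    base_subset := subset_rfl
    tip_mem := ht
    reach_of_base := h.reach
    reach_tip := fun a ha => h.reach a ha t ht }

theorem IsEarOn.isStrongOrientationOn (h : IsEarOn A O W₀ W t) (ht : t ∈ W₀) :
    IsStrongOrientationOn A O W :=
  { h.toIsOrientationOn with
    reach := fun a ha b hb => (h.reach_tip a ha).trans (h.reach_of_base t ht b hb) }

theorem IsEarOn.insert (h : IsEarOn A O W₀ W t) (htw : (t, w) ∈ A) (hwt : (w, t) ∉ O)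
    (hne : t ≠ w) : IsEarOn A (insert (t, w) O) W₀ (insert w W) w where
  toIsOrientationOn := h.toIsOrientationOn.insert htw h.tip_mem hwt hne
  base_subset := h.base_subset.trans (subset_insert _ _)
  tip_mem := mem_insert _ _
  reach_of_base := by
    rintro a ha b (rfl | hb)
    · exact (h.reach_tip a (h.base_subset ha)).insert_tail
    · exact (h.reach_of_base a ha b hb).mono (subset_insert _ _)
  reach_tip := by
    rintro a (rfl | ha)
    · exact .refl
    · exact (h.reach_tip a ha).insert_tail

/-- A step of an ear on the base `W₀` whose vertices so far are `W`: it starts outside the base,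
does not reverse an arc of `O`, and does not revisit the ear. -/
def EarStep (A O : Set (V × V)) (W₀ W : Set V) (x y : V) : Prop :=
  (x, y) ∈ A ∧ (y, x) ∉ O ∧ x ∉ W₀ ∧ (y ∈ W → y ∈ W₀)

structure IsPartialEar (A O : Set (V × V)) (W₀ W : Set V) (t : V) : Prop
    extends IsEarOn A O W₀ W t where
  escape : ∃ z ∈ W₀, ReflTransGen (EarStep A O W₀ W) t z

theorem IsPartialEar.step (h : IsPartialEar A O W₀ W t) (ht : t ∉ W₀) :
    ∃ w, (w ∈ W₀ ∨ w ∉ W) ∧ IsPartialEar A (insert (t, w) O) W₀ (insert w W) w := by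
  obtain ⟨z, hz, htz⟩ := h.escape
  obtain rfl | ⟨w, ⟨htw, hwt, -, hwW⟩, hwz⟩ := htz.cases_head
  · exact absurd hz ht
  have hne : t ≠ w := by rintro rfl; exact ht (hwW h.tip_mem)
  refine ⟨w, by tauto, h.toIsEarOn.insert htw hwt hne,
    z, hz, ReflTransGen.mono ?_ _ _ hwz.avoid_start⟩
  rintro x y ⟨⟨hxy, hyx, hx, hyW⟩, hyw⟩
  refine ⟨hxy, ?_, hx, ?_⟩
  · rintro (hyx' | hyx')
    · obtain ⟨rfl, -⟩ := Prod.mk.inj hyx'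
      exact ht (hyW h.tip_mem)
    · exact hyx hyx'
  · rintro (rfl | hy)
    · exact absurd rfl hyw
    · exact hyW hy

theorem IsPartialEar.exists_isStrongOrientationOn [Finite V] (h : IsPartialEar A O W₀ W t) :
    ∃ W' O', IsStrongOrientationOn A O' W' ∧ W ⊆ W' := by
  obtain ⟨W', hWW', hmax⟩ :=
    Finite.exists_le_maximal (p := fun W' => ∃ O' t', IsPartialEar A O' W₀ W' t') ⟨O, t, h⟩
  obtain ⟨O', t', h'⟩ := hmax.prop
  by_cases ht' : t' ∈ W₀
  · exact ⟨W', O', h'.isStrongOrientationOn ht', hWW'⟩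
  obtain ⟨w, hw | hw, h''⟩ := h'.step ht'
  · rw [insert_eq_of_mem (h'.base_subset hw)] at h''
    exact ⟨W', _, h''.isStrongOrientationOn hw, hWW'⟩
  · exact absurd (ssubset_insert hw) (hmax.not_ssuperset ⟨_, _, h''⟩)

theorem IsStrongOrientationOn.exists_isPartialEar (h : IsStrongOrientationOn A O W)
    (hsym : SymmetricArcs A) (hs : IsStrong A) (hnb : ¬HasBridge A) (hne : W.Nonempty)
    (hW : W ≠ univ) : ∃ v ∉ W, ∃ O', IsPartialEar A O' W (insert v W) v := by
  obtain ⟨a, ha⟩ := hne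
  obtain ⟨b, hb⟩ := (ne_univ_iff_exists_notMem W).mp hW
  obtain ⟨u, v, huv, hu, hv⟩ := (hs a b).exists_crossing ha hb
  have hne : u ≠ v := by rintro rfl; exact hv hu
  obtain ⟨z, hz, hvz⟩ :=
    ((isStrong_diff_pair_of_not_hasBridge hsym hnb huv hne) v u).avoid_start.exists_first_mem hu
  refine ⟨v, hv, insert (u, v) O,
    (h.isEarOn_self hu).insert huv (fun hvu => hv (h.mem _ hvu).1) hne,
    z, hz, ReflTransGen.mono ?_ _ _ hvz⟩
  rintro x y ⟨⟨⟨hxy, hxy'⟩, hyv⟩, hx⟩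
  refine ⟨hxy, ?_, hx, ?_⟩
  · rintro (hyx | hyx)
    · obtain ⟨rfl, rfl⟩ := Prod.mk.inj hyx
      exact hxy' (by simp)
    · exact hx (h.mem _ hyx).2
  · rintro (rfl | hy)
    · exact absurd rfl hyv
    · exact hy

theorem exists_isStrongOrientationOn_univ [Finite V] (hsym : SymmetricArcs A) (hs : IsStrong A)
    (hnb : ¬HasBridge A) : ∃ O, IsStrongOrientationOn A O univ := by
  cases isEmpty_or_nonempty V with
  | inl _ => exact ⟨∅, ⟨empty_subset _, by simp, by simp⟩, fun a => isEmptyElim a⟩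
  | inr hV =>
    obtain ⟨r⟩ := hV
    have hr : IsStrongOrientationOn A ∅ {r} :=
      ⟨⟨empty_subset _, by simp, by simp⟩, by rintro a rfl b rfl; exact .refl⟩
    obtain ⟨W, hrW, hmax⟩ :=
      Finite.exists_le_maximal (p := fun W => ∃ O, IsStrongOrientationOn A O W) ⟨∅, hr⟩
    obtain ⟨O, hO⟩ := hmax.prop
    by_cases hW : W = univ
    · exact ⟨O, hW ▸ hO⟩
    obtain ⟨v, hv, O', hear⟩ :=
      hO.exists_isPartialEar hsym hs hnb ⟨r, hrW rfl⟩ hW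
    obtain ⟨W', O'', hW', hsub⟩ := hear.exists_isStrongOrientationOn
    exact absurd ((ssubset_insert hv).trans_subset hsub) (hmax.not_ssuperset ⟨O'', hW'⟩)

end Orientation

section Connectivity

variable {A B O : Set (V × V)} {S W : Set V} {a b x y : V}

theorem eq_or_eq_of_mem_of_notMem_diff_pair (hab : (a, b) ∈ A)
    (hab' : (a, b) ∉ A \ {(x, y), (y, x)}) : (a = x ∧ b = y) ∨ (a = y ∧ b = x) := by
  simp only [mem_sdiff, mem_insert_iff, mem_singleton_iff, Prod.mk.injEq, not_or] at hab'
  tauto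

def WeakAdj (A : Set (V × V)) (a b : V) : Prop := (a, b) ∈ A ∨ (b, a) ∈ A

instance : Std.Symm (WeakAdj A) := ⟨fun _ _ => Or.symm⟩

theorem weaklyConnected_diff_pair (hs : IsStrong A)
    (hxy : ReflTransGen (WeakAdj (A \ {(x, y), (y, x)})) x y) :
    WeaklyConnected (A \ {(x, y), (y, x)}) := by
  refine fun u v =>
    reflTransGen_closed (p := WeakAdj (A \ {(x, y), (y, x)})) (fun a b hab => ?_) _ _ (hs u v)
  by_cases hab' : (a, b) ∈ A \ {(x, y), (y, x)}
  · exact .single (Or.inl hab')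
  · obtain ⟨rfl, rfl⟩ | ⟨rfl, rfl⟩ := eq_or_eq_of_mem_of_notMem_diff_pair hab hab'
    · exact hxy
    · exact symm hxy

theorem SStrongSub.mem_of_bridge (hs : IsStrong A)
    (hdisc : ¬WeaklyConnected (A \ {(x, y), (y, x)})) (hB : SStrongSub A S W B) (hx : x ∈ S)
    (hy : y ∈ S) : (x, y) ∈ B := by
  set C := {w | ReflTransGen (WeakAdj (A \ {(x, y), (y, x)})) x w}
  have hyC : y ∉ C := fun hyC => hdisc (weaklyConnected_diff_pair hs hyC)
  obtain ⟨hBA, hSW, -, hreach⟩ := hB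
  obtain ⟨p, q, hpq, hp, hq⟩ :=
    (hreach x (hSW hx) y (hSW hy)).exists_crossing (s := C) ReflTransGen.refl hyC
  have hpq' : (p, q) ∉ A \ {(x, y), (y, x)} := fun h => hq (ReflTransGen.tail hp (Or.inl h))
  obtain ⟨rfl, rfl⟩ | ⟨rfl, rfl⟩ := eq_or_eq_of_mem_of_notMem_diff_pair (hBA hpq) hpq'
  · exact hpq
  · exact absurd hp hyC

theorem lamS_le_one_of_forall_mem {e : V × V} (h : ∀ W B, SStrongSub A S W B → e ∈ B) :
    lamS A S ≤ 1 := by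
  refine csSup_le ⟨0, Fin.elim0, Fin.elim0, fun i => i.elim0, fun i => i.elim0⟩ ?_
  rintro t ⟨W, B, hB, hdisj⟩
  by_contra! ht
  exact Set.disjoint_left.mp (hdisj ⟨0, by omega⟩ ⟨1, by omega⟩ (by simp [Fin.ext_iff]))
    (h _ _ (hB _)) (h _ _ (hB _))

theorem SStrongSub.nonempty (hB : SStrongSub A S W B) (hS : S.Nontrivial) : B.Nonempty := by
  obtain ⟨a, ha, b, hb, hab⟩ := hS
  obtain rfl | ⟨c, hac, -⟩ := (hB.2.2.2 a (hB.2.1 ha) b (hB.2.1 hb)).cases_head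
  · exact absurd rfl hab
  · exact ⟨(a, c), hac⟩

theorem le_lamS [Finite V] (hS : S.Nontrivial) {t : ℕ} {W : Fin t → Set V}
    {B : Fin t → Set (V × V)} (hB : ∀ i, SStrongSub A S (W i) (B i))
    (hdisj : ∀ i j, i ≠ j → Disjoint (B i) (B j)) : t ≤ lamS A S := by
  refine le_csSup ⟨Nat.card (V × V), ?_⟩ ⟨W, B, hB, hdisj⟩
  rintro t ⟨W, B, hB, hdisj⟩
  choose e he using fun i => (hB i).nonempty hS
  have he_inj : Function.Injective e := fun i j hij => by
    by_contra hne
    exact Set.disjoint_left.mp (hdisj i j hne) (he i) (hij ▸ he j)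
  simpa using Nat.card_le_card_of_injective e he_inj

theorem sStrongSub_univ (hBA : B ⊆ A) (hB : IsStrong B) : SStrongSub A S univ B :=
  ⟨hBA, subset_univ S, fun _ _ => ⟨trivial, trivial⟩, fun a _ b _ => hB a b⟩

theorem two_le_lamS [Finite V] (hsym : SymmetricArcs A) (hO : IsStrongOrientationOn A O univ)
    (hS : S.Nontrivial) : 2 ≤ lamS A S := by
  have hOs : IsStrong O := fun a b => hO.reach a trivial b trivial
  have hO' : SStrongSub A S univ (Prod.swap ⁻¹' O) :=
    sStrongSub_univ (fun e he => hsym _ _ (hO.subset he)) fun a b =>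
      ReflTransGen.swap _ _ (hOs b a)
  have hd : Disjoint O (Prod.swap ⁻¹' O) :=
    Set.disjoint_left.mpr fun e he hswap => hO.antisymm e.1 e.2 he hswap
  refine le_lamS hS (W := fun _ => univ) (B := ![O, Prod.swap ⁻¹' O]) ?_ ?_
  · intro i
    fin_cases i
    exacts [sStrongSub_univ hO.subset hOs, hO']
  · intro i j hij
    fin_cases i <;> fin_cases j <;> simp_all [hd.symm]

theorem lamK_le_lamS [Fintype V] {k : ℕ} {S : Finset V} (hS : S.card = k) :
    lamK A k ≤ lamS A S :=
  Nat.sInf_le ⟨S, hS, rfl⟩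

theorem le_lamK [Fintype V] {k m : ℕ} (hk : k ≤ Fintype.card V)
    (h : ∀ S : Finset V, S.card = k → m ≤ lamS A S) : m ≤ lamK A k := by
  obtain ⟨S, -, hS⟩ := Finset.exists_subset_card_eq (s := (Finset.univ : Finset V)) (n := k)
    (by rwa [Finset.card_univ])
  exact le_csInf ⟨_, S, hS, rfl⟩ (by rintro _ ⟨S, hS, rfl⟩; exact h S hS)

end Connectivity

theorem lamK_ge_two_iff_no_bridge_general {V : Type*} [Fintype V] (A : Set (V × V))
    (k : ℕ) (hsym : SymmetricArcs A) (hs : IsStrong A)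
    (h2 : 2 ≤ k) (hk : k ≤ Fintype.card V) :
    2 ≤ lamK A k ↔ ¬ HasBridge A := by
  classical
  refine ⟨?_, fun hnb => ?_⟩
  · rintro hlam ⟨x, y, hxy, -, -, hdisc⟩
    obtain ⟨S, hxyS, -, hS⟩ :=
      Finset.exists_subsuperset_card_eq (n := k) (Finset.subset_univ {x, y})
        (by rwa [Finset.card_pair hxy]) (by rwa [Finset.card_univ])
    have hS1 : lamS A S ≤ 1 := lamS_le_one_of_forall_mem fun _ _ hB =>
      hB.mem_of_bridge hs hdisc (hxyS (by simp)) (hxyS (by simp))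
    have := lamK_le_lamS (A := A) hS
    omega
  · obtain ⟨O, hO⟩ := exists_isStrongOrientationOn_univ hsym hs hnb
    exact le_lamK hk fun S hS =>
      two_le_lamS hsym hO (Finset.one_lt_card_iff_nontrivial.mp (by omega))

/-- For a strong symmetric digraph `D` of order `n` and
`2 ≤ k ≤ n`, `λ_k(D) ≥ 2` iff `D` has no bridge. -/
theorem lamK_ge_two_iff_no_bridge {V : Type*} [Fintype V] (A : Set (V × V))
    (k : ℕ) (hA : IsDigraph A) (hsym : SymmetricArcs A) (hs : IsStrong A)
    (h2 : 2 ≤ k) (hk : k ≤ Fintype.card V) :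
    2 ≤ lamK A k ↔ ¬ HasBridge A :=
  lamK_ge_two_iff_no_bridge_general A k hsym hs h2 hk
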